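/- Let 0 ≤ α < β < 1, 0 < γ < 1 with (m+α)/γ = m+β, and let L ≥ 1. Suppose sequences of nonnegative reals (N_k), (F_k) with F_k ≤ N_k satisfy Σ_k N_k^{1-α} F_k^α < ∞. Define U_{n,k}-bounds: A_{n,k} = min( C L^{m+1} 2^{n(1-γ)(m+1)} F_k , C L^{m+1} 2^{-nγ} 2^{n(1-γ)m} N_k ) and B_{n,k} = C L^m 2^{n(1-γ)m} N_k. Then for any δ with β < δ ≤ 1, Σ_n Σ_k B_{n,k}^{1-δ} A_{n,k}^δ ≤ C' Σ_k N_k^{1-α} F_k^α · Σ_n 2^{-nγ(δ-β)} < ∞. -/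
import Mathlib


/-- The flat-norm bound `A_{n,k}` for `U_{n,k} = (f_{n+1})_# T_k - (f_n)_# T_k`. -/
noncomputable def Abound (m : ℕ) (γ L C : ℝ) (N F : ℕ → ℝ) (n k : ℕ) : ℝ :=
  min (C * L ^ (m + 1) * 2 ^ ((n : ℝ) * (1 - γ) * ((m : ℝ) + 1)) * F k)
    (C * L ^ (m + 1) * 2 ^ (-(n : ℝ) * γ) * 2 ^ ((n : ℝ) * (1 - γ) * (m : ℝ)) * N k)

/-- The normal-mass bound `B_{n,k}` for `U_{n,k}`. -/
noncomputable def Bbound (m : ℕ) (γ L C : ℝ) (N : ℕ → ℝ) (n k : ℕ) : ℝ :=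
  C * L ^ m * 2 ^ ((n : ℝ) * (1 - γ) * (m : ℝ)) * N k

lemma pointwise16 (m : ℕ) (α β γ L C δ : ℝ)
    (hα : 0 ≤ α) (hαβ : α < β) (hβ : β < 1) (hγ0 : 0 < γ) (hγ1 : γ < 1)
    (hrel : ((m : ℝ) + α) / γ = (m : ℝ) + β) (hL : 1 ≤ L) (hC : 0 < C)
    (hδ : β < δ) (hδ1 : δ ≤ 1)
    (N F : ℕ → ℝ) (hF : ∀ k, 0 ≤ F k) (hFN : ∀ k, F k ≤ N k) (n k : ℕ) :
    Bbound m γ L C N n k ^ (1 - δ) * Abound m γ L C N F n k ^ δ ≤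
      (C * L ^ (m + 1)) *
        ((2:ℝ) ^ (-(n:ℝ) * γ * (δ - β)) * (N k ^ (1 - α) * F k ^ α)) := by
  have hL0 : (0:ℝ) < L := lt_of_lt_of_le one_pos hL
  have hN0 : 0 ≤ N k := le_trans (hF k) (hFN k)
  have hδ0 : 0 < δ := by linarith
  have hδα : 0 ≤ δ - α := by linarith
  have h1δ : 0 ≤ 1 - δ := by linarith
  set x : ℝ := (n : ℝ) with hx
  have hc1pos : (0:ℝ) < C * L ^ (m + 1) * 2 ^ (x * (1 - γ) * ((m : ℝ) + 1)) := by positivity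
  have hc2pos : (0:ℝ) < C * L ^ (m + 1) * 2 ^ (-x * γ) * 2 ^ (x * (1 - γ) * (m : ℝ)) := by
    positivity
  have hbpos : (0:ℝ) < C * L ^ m * 2 ^ (x * (1 - γ) * (m : ℝ)) := by positivity
  have hA0 : 0 ≤ Abound m γ L C N F n k :=
    le_min (mul_nonneg hc1pos.le (hF k)) (mul_nonneg hc2pos.le hN0)
  have hB0 : 0 ≤ Bbound m γ L C N n k := mul_nonneg hbpos.le hN0
  have step1 : Abound m γ L C N F n k ^ δ ≤
      (C * L ^ (m + 1) * 2 ^ (x * (1 - γ) * ((m : ℝ) + 1)) * F k) ^ α *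
      (C * L ^ (m + 1) * 2 ^ (-x * γ) * 2 ^ (x * (1 - γ) * (m : ℝ)) * N k) ^ (δ - α) := by
    have h1 : Abound m γ L C N F n k ^ δ
        = Abound m γ L C N F n k ^ α * Abound m γ L C N F n k ^ (δ - α) := by
      rw [← Real.rpow_add_of_nonneg hA0 hα hδα]; ring_nf
    rw [h1]
    exact mul_le_mul (Real.rpow_le_rpow hA0 (min_le_left _ _) hα)
      (Real.rpow_le_rpow hA0 (min_le_right _ _) hδα)
      (Real.rpow_nonneg hA0 _) (Real.rpow_nonneg (mul_nonneg hc1pos.le (hF k)) _)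
  refine le_trans (mul_le_mul_of_nonneg_left step1 (Real.rpow_nonneg hB0 _)) ?_
  -- key constant identity
  have hrel' : (m:ℝ) + α = γ * ((m:ℝ) + β) := by
    field_simp at hrel; linarith
  have hK : (C * L ^ m * 2 ^ (x * (1 - γ) * (m : ℝ))) ^ (1 - δ) *
      (C * L ^ (m + 1) * 2 ^ (x * (1 - γ) * ((m : ℝ) + 1))) ^ α *
      (C * L ^ (m + 1) * 2 ^ (-x * γ) * 2 ^ (x * (1 - γ) * (m : ℝ))) ^ (δ - α)
      = C * L ^ ((m:ℝ) + δ) * 2 ^ (-x * γ * (δ - β)) := by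
    rw [show C = Real.exp (Real.log C) from (Real.exp_log hC).symm,
      show L = Real.exp (Real.log L) from (Real.exp_log hL0).symm,
      show (2:ℝ) = Real.exp (Real.log 2) from (Real.exp_log (by norm_num)).symm]
    simp only [← Real.exp_nat_mul, ← Real.exp_mul, ← Real.exp_add]
    rw [Real.exp_eq_exp]
    push_cast
    linear_combination (Real.log 2) * x * hrel'
  have hNN : N k ^ (1 - δ) * N k ^ (δ - α) = N k ^ (1 - α) := by
    rw [← Real.rpow_add_of_nonneg hN0 h1δ hδα]; ring_nf
  have hEq : Bbound m γ L C N n k ^ (1 - δ) *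
      ((C * L ^ (m + 1) * 2 ^ (x * (1 - γ) * ((m : ℝ) + 1)) * F k) ^ α *
       (C * L ^ (m + 1) * 2 ^ (-x * γ) * 2 ^ (x * (1 - γ) * (m : ℝ)) * N k) ^ (δ - α))
      = (C * L ^ ((m:ℝ) + δ) * 2 ^ (-x * γ * (δ - β))) * (N k ^ (1 - α) * F k ^ α) := by
    show (C * L ^ m * 2 ^ (x * (1 - γ) * (m : ℝ)) * N k) ^ (1 - δ) * _ = _
    rw [Real.mul_rpow hbpos.le hN0, Real.mul_rpow hc1pos.le (hF k),
      Real.mul_rpow hc2pos.le hN0]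
    calc (C * L ^ m * 2 ^ (x * (1 - γ) * (m : ℝ))) ^ (1 - δ) * N k ^ (1 - δ) *
        ((C * L ^ (m + 1) * 2 ^ (x * (1 - γ) * ((m : ℝ) + 1))) ^ α * F k ^ α *
         ((C * L ^ (m + 1) * 2 ^ (-x * γ) * 2 ^ (x * (1 - γ) * (m : ℝ))) ^ (δ - α) *
          N k ^ (δ - α)))
        = ((C * L ^ m * 2 ^ (x * (1 - γ) * (m : ℝ))) ^ (1 - δ) *
           (C * L ^ (m + 1) * 2 ^ (x * (1 - γ) * ((m : ℝ) + 1))) ^ α *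
           (C * L ^ (m + 1) * 2 ^ (-x * γ) * 2 ^ (x * (1 - γ) * (m : ℝ))) ^ (δ - α)) *
          (N k ^ (1 - δ) * N k ^ (δ - α)) * F k ^ α := by ring
      _ = _ := by rw [hK, hNN]; ring
  rw [hEq]
  have hLle : L ^ ((m:ℝ) + δ) ≤ L ^ (m + 1) := by
    rw [← Real.rpow_natCast L (m + 1)]
    push_cast
    exact Real.rpow_le_rpow_of_exponent_le hL (by linarith)
  have hrest : (0:ℝ) ≤ 2 ^ (-x * γ * (δ - β)) * (N k ^ (1 - α) * F k ^ α) :=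
    mul_nonneg (Real.rpow_nonneg (by norm_num) _)
      (mul_nonneg (Real.rpow_nonneg hN0 _) (Real.rpow_nonneg (hF k) _))
  calc C * L ^ ((m:ℝ) + δ) * 2 ^ (-x * γ * (δ - β)) * (N k ^ (1 - α) * F k ^ α)
      = (C * L ^ ((m:ℝ) + δ)) * (2 ^ (-x * γ * (δ - β)) * (N k ^ (1 - α) * F k ^ α)) := by
        ring
    _ ≤ (C * L ^ (m + 1)) * (2 ^ (-x * γ * (δ - β)) * (N k ^ (1 - α) * F k ^ α)) := by
        apply mul_le_mul_of_nonneg_right _ hrest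
        exact mul_le_mul_of_nonneg_left hLle hC.le

/-- Arithmetic heart of Step 3 of the Hölder pushforward theorem. -/
theorem stmt16 (m : ℕ) (α β γ L C δ : ℝ)
    (hα : 0 ≤ α) (hαβ : α < β) (hβ : β < 1) (hγ0 : 0 < γ) (hγ1 : γ < 1)
    (hrel : ((m : ℝ) + α) / γ = (m : ℝ) + β) (hL : 1 ≤ L) (hC : 0 < C)
    (hδ : β < δ) (hδ1 : δ ≤ 1) :
    ∃ C' > (0 : ℝ), ∀ N F : ℕ → ℝ, (∀ k, 0 ≤ F k) → (∀ k, F k ≤ N k) →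
      (Summable fun k => N k ^ (1 - α) * F k ^ α) →
      (Summable fun p : ℕ × ℕ =>
        Bbound m γ L C N p.1 p.2 ^ (1 - δ) * Abound m γ L C N F p.1 p.2 ^ δ) ∧
      ∑' n : ℕ, ∑' k : ℕ, Bbound m γ L C N n k ^ (1 - δ) * Abound m γ L C N F n k ^ δ ≤
        C' * (∑' k, N k ^ (1 - α) * F k ^ α) *
          ∑' n : ℕ, (2 : ℝ) ^ (-(n : ℝ) * γ * (δ - β)) := by
  have hL0 : (0:ℝ) < L := lt_of_lt_of_le one_pos hL
  refine ⟨C * L ^ (m + 1), by positivity, fun N F hF hFN hSum => ?_⟩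
  set g : ℕ → ℝ := fun n => (2:ℝ) ^ (-(n:ℝ) * γ * (δ - β)) with hg
  set h : ℕ → ℝ := fun k => N k ^ (1 - α) * F k ^ α with hh
  have hN0 : ∀ k, 0 ≤ N k := fun k => le_trans (hF k) (hFN k)
  have hg0 : ∀ n, 0 ≤ g n := fun n => Real.rpow_nonneg (by norm_num) _
  have hh0 : ∀ k, 0 ≤ h k := fun k =>
    mul_nonneg (Real.rpow_nonneg (hN0 k) _) (Real.rpow_nonneg (hF k) _)
  -- geometric summability of g
  have hgeq : ∀ n : ℕ, g n = ((2:ℝ) ^ (-(γ * (δ - β)))) ^ n := by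
    intro n
    rw [hg, ← Real.rpow_natCast ((2:ℝ) ^ (-(γ * (δ - β)))) n,
      ← Real.rpow_mul (by norm_num)]
    ring_nf
  have hr0 : (0:ℝ) ≤ (2:ℝ) ^ (-(γ * (δ - β))) := Real.rpow_nonneg (by norm_num) _
  have hr1 : (2:ℝ) ^ (-(γ * (δ - β))) < 1 :=
    Real.rpow_lt_one_of_one_lt_of_neg (by norm_num)
      (by nlinarith)
  have hgsum : Summable g := by
    rw [funext hgeq]
    exact summable_geometric_of_lt_one hr0 hr1
  -- nonnegativity of the terms
  have hA0 : ∀ n k, 0 ≤ Abound m γ L C N F n k := by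
    intro n k
    exact le_min (mul_nonneg (by positivity) (hF k)) (mul_nonneg (by positivity) (hN0 k))
  have hB0 : ∀ n k, 0 ≤ Bbound m γ L C N n k := fun n k =>
    mul_nonneg (by positivity) (hN0 k)
  have hterm0 : ∀ p : ℕ × ℕ,
      0 ≤ Bbound m γ L C N p.1 p.2 ^ (1 - δ) * Abound m γ L C N F p.1 p.2 ^ δ :=
    fun p => mul_nonneg (Real.rpow_nonneg (hB0 _ _) _) (Real.rpow_nonneg (hA0 _ _) _)
  have hpt : ∀ p : ℕ × ℕ,
      Bbound m γ L C N p.1 p.2 ^ (1 - δ) * Abound m γ L C N F p.1 p.2 ^ δ ≤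
        (C * L ^ (m + 1)) * (g p.1 * h p.2) :=
    fun p => pointwise16 m α β γ L C δ hα hαβ hβ hγ0 hγ1 hrel hL hC hδ hδ1 N F hF hFN p.1 p.2
  have hdomsum : Summable fun p : ℕ × ℕ => (C * L ^ (m + 1)) * (g p.1 * h p.2) :=
    ((hgsum.mul_of_nonneg hSum (fun n => hg0 n) (fun k => hh0 k))).mul_left _
  have hmainsum : Summable fun p : ℕ × ℕ =>
      Bbound m γ L C N p.1 p.2 ^ (1 - δ) * Abound m γ L C N F p.1 p.2 ^ δ :=
    Summable.of_nonneg_of_le hterm0 hpt hdomsum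
  refine ⟨hmainsum, ?_⟩
  rw [← Summable.tsum_prod' hmainsum fun b => hmainsum.prod_factor b]
  calc (∑' p : ℕ × ℕ, Bbound m γ L C N p.1 p.2 ^ (1 - δ) * Abound m γ L C N F p.1 p.2 ^ δ)
      ≤ ∑' p : ℕ × ℕ, (C * L ^ (m + 1)) * (g p.1 * h p.2) :=
        Summable.tsum_le_tsum hpt hmainsum hdomsum
    _ = (C * L ^ (m + 1)) * ∑' p : ℕ × ℕ, g p.1 * h p.2 := tsum_mul_left
    _ = (C * L ^ (m + 1)) * ((∑' n, g n) * (∑' k, h k)) := by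
        have hgh := hgsum.mul_of_nonneg hSum (fun n => hg0 n) (fun k => hh0 k)
        rw [Summable.tsum_prod' hgh fun b => hgh.prod_factor b]
        congr 1
        calc ∑' n, ∑' k, g n * h k = ∑' n, g n * ∑' k, h k := by
              simp_rw [tsum_mul_left]
          _ = (∑' n, g n) * ∑' k, h k := tsum_mul_right
    _ = C * L ^ (m + 1) * (∑' k, h k) * ∑' n, g n := by ring
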